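/- arXiv:2605.22603 — 6 statements merged into one kernel-verified Lean document; each statement's English description precedes it below -/
import Mathlib

section
/- Let n ≥ 2, α, β > 0 with α² + β² = 1, and define f_n(γ) := α² + β²γ^n − αβ(1−γ)^{n/2} for γ ∈ [0,1]. Then f_n is strictly increasing on (0,1). Moreover, if α < β (i.e. r := α/β < 1), then f_n(0) < 0 and f_n(1 − r^{2/n}) > 0, so f_n has a unique zero γ₋ in the open interval (0, 1 − r^{2/n}). -/
/-! The vacuum term `β²γⁿ` increases and the coherence term `αβ(1-γ)^{n/2}` decreases in `γ`,
so `f` is strictly increasing. At `γ = 0` it equals `α(α - β) < 0`; at `γ = 1 - s` with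
`s = r^{2/n}` the coherence term is `αβ s^{n/2} = αβ r = α²`, leaving `β²(1-s)ⁿ > 0`.
The intermediate value theorem and injectivity give the unique zero. -/

open Set Real

theorem strictMonoOn_add_mul_rpow_sub_mul_one_sub_rpow (c : ℝ) {a b p q : ℝ} (ha : 0 < a)
    (hb : 0 ≤ b) (hp : 0 < p) (hq : 0 < q) :
    StrictMonoOn (fun γ => c + a * γ ^ p - b * (1 - γ) ^ q) (Icc 0 1) := by
  intro x hx y hy hxy
  have hpow : x ^ p < y ^ p := rpow_lt_rpow hx.1 hxy hp
  have hpow_one_sub : (1 - y) ^ q < (1 - x) ^ q :=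
    rpow_lt_rpow (by linarith [hy.2]) (by linarith) hq
  dsimp only
  nlinarith [mul_lt_mul_of_pos_left hpow ha, mul_le_mul_of_nonneg_left hpow_one_sub.le hb]

theorem continuous_add_mul_rpow_sub_mul_one_sub_rpow (c a b : ℝ) {p q : ℝ} (hp : 0 ≤ p)
    (hq : 0 ≤ q) : Continuous (fun γ : ℝ => c + a * γ ^ p - b * (1 - γ) ^ q) := by
  have hγ : Continuous (fun γ : ℝ => γ ^ p) := continuous_rpow_const hp
  have hγ' : Continuous (fun γ : ℝ => (1 - γ) ^ q) :=
    (continuous_rpow_const hq).comp (continuous_const.sub continuous_id)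
  fun_prop

theorem rpow_two_div_rpow_div_two {r : ℝ} (hr : 0 ≤ r) {x : ℝ} (hx : x ≠ 0) :
    (r ^ (2 / x)) ^ (x / 2) = r := by
  rw [← rpow_mul hr, div_mul_div_comm, mul_comm, div_self (by positivity), rpow_one]

theorem existsUnique_zero_mem_Ioo_of_strictMonoOn {f : ℝ → ℝ} {a b : ℝ} (hab : a ≤ b)
    (hcont : ContinuousOn f (Icc a b)) (hmono : StrictMonoOn f (Ioo a b)) (ha : f a < 0)
    (hb : 0 < f b) : ∃! x, x ∈ Ioo a b ∧ f x = 0 := by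
  obtain ⟨x, hx, hfx⟩ := intermediate_value_Ioo hab hcont ⟨ha, hb⟩
  exact ⟨x, ⟨hx, hfx⟩, fun y ⟨hy, hfy⟩ => hmono.injOn hy hx (hfy.trans hfx.symm)⟩

theorem magic_death_function_monotone_unique_zero_general
    (n : ℕ) (hn : 2 ≤ n) (α β : ℝ) (hα : 0 < α) (hβ : 0 < β)
    (r : ℝ) (hr : r = α / β)
    (f : ℝ → ℝ)
    (hf : f = fun γ => α ^ 2 + β ^ 2 * γ ^ (n : ℝ) - α * β * (1 - γ) ^ ((n : ℝ) / 2)) :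
    StrictMonoOn f (Set.Ioo 0 1) ∧
    (α < β →
      f 0 < 0 ∧
      f (1 - r ^ (2 / (n : ℝ))) > 0 ∧
      ∃! γ : ℝ, γ ∈ Set.Ioo (0 : ℝ) (1 - r ^ (2 / (n : ℝ))) ∧ f γ = 0) := by
  have hn0 : (0 : ℝ) < n := by exact_mod_cast (by omega : 0 < n)
  have hmono : StrictMonoOn f (Icc 0 1) := hf ▸
    strictMonoOn_add_mul_rpow_sub_mul_one_sub_rpow _ (by positivity) (by positivity) hn0
      (by positivity)
  refine ⟨hmono.mono Ioo_subset_Icc_self, fun hαβ => ?_⟩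
  have hr0 : 0 < r := hr ▸ div_pos hα hβ
  set s := r ^ (2 / (n : ℝ))
  have hs0 : 0 < s := rpow_pos_of_pos hr0 _
  have hs1 : s < 1 := rpow_lt_one hr0.le (hr ▸ (div_lt_one hβ).2 hαβ) (by positivity)
  have hf0 : f 0 < 0 := by
    simp only [hf, zero_rpow hn0.ne', sub_zero, one_rpow]
    nlinarith
  have hfs : f (1 - s) = β ^ 2 * (1 - s) ^ (n : ℝ) := by
    have hcoh : α * β * s ^ ((n : ℝ) / 2) = α ^ 2 := by
      rw [rpow_two_div_rpow_div_two hr0.le hn0.ne', hr]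
      field_simp
    simp only [hf, sub_sub_cancel, hcoh]
    ring
  have hfs_pos : f (1 - s) > 0 := hfs ▸ mul_pos (by positivity) (rpow_pos_of_pos (by linarith) _)
  refine ⟨hf0, hfs_pos, existsUnique_zero_mem_Ioo_of_strictMonoOn (by linarith) ?_
    (hmono.mono fun x hx => ⟨hx.1.le, by linarith [hx.2]⟩) hf0 hfs_pos⟩
  exact (hf ▸ continuous_add_mul_rpow_sub_mul_one_sub_rpow _ _ _ hn0.le
    (by positivity)).continuousOn

theorem magic_death_function_monotone_unique_zero
    (n : ℕ) (hn : 2 ≤ n) (α β : ℝ) (hα : 0 < α) (hβ : 0 < β)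
    (hnorm : α ^ 2 + β ^ 2 = 1) (r : ℝ) (hr : r = α / β)
    (f : ℝ → ℝ)
    (hf : f = fun γ => α ^ 2 + β ^ 2 * γ ^ (n : ℝ) - α * β * (1 - γ) ^ ((n : ℝ) / 2)) :
    StrictMonoOn f (Set.Ioo 0 1) ∧
    (α < β →
      f 0 < 0 ∧
      f (1 - r ^ (2 / (n : ℝ))) > 0 ∧
      ∃! γ : ℝ, γ ∈ Set.Ioo (0 : ℝ) (1 - r ^ (2 / (n : ℝ))) ∧ f γ = 0) :=
  magic_death_function_monotone_unique_zero_general n hn α β hα hβ r hr f hf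
end

section
/- Let P₀, P_n, c be nonnegative reals with P₀ + P_n > 0, and define Bloch coordinates x := 2c/(P₀+P_n) and z := (P₀−P_n)/(P₀+P_n). Then |x| + |z| > 1 if and only if c > min(P₀, P_n). Moreover, the identity max{0, |x| + |z| − 1}·(P₀+P_n) = 2·max{0, c − P₀, c − P_n} holds. -/
/-!
Both Bloch coordinates share the denominator `P₀ + Pn`, and `P₀ + Pn - |P₀ - Pn| = 2 min P₀ Pn`,
so the octahedron excess is `|x| + |z| - 1 = 2 (c - min P₀ Pn) / (P₀ + Pn)`. Its sign is the sign
of `c - min P₀ Pn`, and clearing the denominator turns its positive part into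
`2 max 0 (c - min P₀ Pn) = 2 max {0, c - P₀, c - Pn}`.
-/

theorem add_sub_abs_sub_eq_two_mul_min {α : Type*} [Ring α] [LinearOrder α] [IsOrderedRing α]
    (a b : α) : a + b - |a - b| = 2 * min a b := by
  rw [← min_add_max a b, abs_sub_comm, ← max_sub_min_eq_abs, two_mul]
  abel

theorem abs_div_add_abs_div_sub_one {α : Type*} [Field α] [LinearOrder α] [IsStrictOrderedRing α]
    {a b c : α} (hc : 0 ≤ c) (hab : 0 < a + b) :
    |2 * c / (a + b)| + |(a - b) / (a + b)| - 1 = 2 * (c - min a b) / (a + b) := by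
  rw [abs_div, abs_div, abs_of_pos hab, abs_of_nonneg (by positivity), mul_sub,
    ← add_sub_abs_sub_eq_two_mul_min]
  field_simp
  ring

theorem lossless_extraction_identity_general
    (P₀ Pn c : ℝ) (hc : 0 ≤ c)
    (hsum : 0 < P₀ + Pn)
    (x z : ℝ) (hx : x = 2 * c / (P₀ + Pn)) (hz : z = (P₀ - Pn) / (P₀ + Pn)) :
    (|x| + |z| > 1 ↔ c > min P₀ Pn) ∧
    max 0 (|x| + |z| - 1) * (P₀ + Pn) = 2 * max 0 (max (c - P₀) (c - Pn)) := by
  have excess : |x| + |z| - 1 = 2 * (c - min P₀ Pn) / (P₀ + Pn) := by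
    rw [hx, hz, abs_div_add_abs_div_sub_one hc hsum]
  constructor
  · rw [gt_iff_lt, ← sub_pos, excess, div_pos_iff_of_pos_right hsum,
      mul_pos_iff_of_pos_left two_pos, sub_pos, gt_iff_lt]
  · rw [excess, max_mul_of_nonneg _ _ hsum.le, zero_mul, div_mul_cancel₀ _ hsum.ne',
      max_sub_sub_left, mul_max_of_nonneg _ _ zero_le_two, mul_zero]

theorem lossless_extraction_identity
    (P₀ Pn c : ℝ) (hP₀ : 0 ≤ P₀) (hPn : 0 ≤ Pn) (hc : 0 ≤ c)
    (hsum : 0 < P₀ + Pn)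
    (x z : ℝ) (hx : x = 2 * c / (P₀ + Pn)) (hz : z = (P₀ - Pn) / (P₀ + Pn)) :
    (|x| + |z| > 1 ↔ c > min P₀ Pn) ∧
    max 0 (|x| + |z| - 1) * (P₀ + Pn) = 2 * max 0 (max (c - P₀) (c - Pn)) :=
  lossless_extraction_identity_general P₀ Pn c hc hsum x z hx hz
end

section
/- Let n ≥ 1 and let w : Fin n → ℝ≥0 with ∑ᵢ wᵢ² = 1, and set S := ∑ᵢ wᵢ. If for every index i with wᵢ > 0 one has wᵢ ≥ S − wᵢ (row dominance), then the number M of indices with wᵢ > 0 satisfies M ≤ 2; and if M = 2, the two nonzero weights are equal (hence both equal 1/√2), while if M = 1 the nonzero weight is 1. -/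
/-!
Summing the row-dominance inequality `S ≤ 2 wᵢ` over the `M` indices of the support gives
`M S ≤ 2 S`, and `S > 0` because the weights have unit norm, so `M ≤ 2`. When `M = 2` the
summed inequality is an equality, so every term is tight and both weights equal `S / 2`;
the normalisation `∑ wᵢ² = 1` then fixes their common value.
-/

open Finset

namespace RowDominance

variable {ι : Type*} [Fintype ι] {w : ι → ℝ}

theorem sum_filter_pos_eq_sum (hw : ∀ i, 0 ≤ w i) {f : ι → ℝ} (hf : ∀ i, w i = 0 → f i = 0) :
    ∑ i ∈ {i | 0 < w i}, f i = ∑ i, f i :=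
  sum_filter_of_ne fun i _ hfi => (hw i).lt_of_ne' fun hwi => hfi (hf i hwi)

theorem sum_pos_of_sum_sq_eq_one (hw : ∀ i, 0 ≤ w i) (hnorm : ∑ i, w i ^ 2 = 1) :
    0 < ∑ i, w i := by
  refine (sum_nonneg fun i _ => hw i).lt_of_ne' fun hS => ?_
  have hzero := (sum_eq_zero_iff_of_nonneg fun i _ => hw i).mp hS
  simp [hzero] at hnorm

theorem card_mul_sum_le_two_mul_sum (hw : ∀ i, 0 ≤ w i)
    (hdom : ∀ i, 0 < w i → ∑ j, w j - w i ≤ w i) :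
    #{i | 0 < w i} * ∑ i, w i ≤ 2 * ∑ i, w i := by
  calc #{i | 0 < w i} * ∑ i, w i
      = ∑ i ∈ {i | 0 < w i}, ∑ j, w j := by rw [sum_const, nsmul_eq_mul]
    _ ≤ ∑ i ∈ {i | 0 < w i}, 2 * w i :=
        sum_le_sum fun i hi => by linarith [hdom i (mem_filter.mp hi).2]
    _ = 2 * ∑ i, w i := by rw [← mul_sum, sum_filter_pos_eq_sum hw fun i => id]

theorem card_filter_pos_le_two (hw : ∀ i, 0 ≤ w i) (hnorm : ∑ i, w i ^ 2 = 1)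
    (hdom : ∀ i, 0 < w i → ∑ j, w j - w i ≤ w i) :
    #{i | 0 < w i} ≤ 2 := by
  have h := card_mul_sum_le_two_mul_sum hw hdom
  exact_mod_cast le_of_mul_le_mul_right h (sum_pos_of_sum_sq_eq_one hw hnorm)

theorem eq_half_sum_of_card_filter_pos_eq_two (hw : ∀ i, 0 ≤ w i)
    (hdom : ∀ i, 0 < w i → ∑ j, w j - w i ≤ w i) (hcard : #{i | 0 < w i} = 2)
    {i : ι} (hi : 0 < w i) :
    w i = (∑ j, w j) / 2 := by
  have hle : ∀ i ∈ ({i | 0 < w i} : Finset ι), ∑ j, w j ≤ 2 * w i :=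
    fun i hi => by linarith [hdom i (mem_filter.mp hi).2]
  have hsum : ∑ i ∈ {i | 0 < w i}, ∑ j, w j = ∑ i ∈ {i | 0 < w i}, 2 * w i := by
    rw [sum_const, hcard, ← mul_sum, sum_filter_pos_eq_sum hw fun i => id]
    ring
  linarith [(sum_eq_sum_iff_of_le hle).mp hsum i (mem_filter.mpr ⟨mem_univ i, hi⟩)]

theorem sum_sq_eq_card_mul_sq (hw : ∀ i, 0 ≤ w i) {c : ℝ} (hc : ∀ i, 0 < w i → w i = c) :
    ∑ i, w i ^ 2 = #{i | 0 < w i} * c ^ 2 := by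
  rw [← sum_filter_pos_eq_sum hw fun i hi => by rw [hi, sq, zero_mul],
    sum_congr rfl fun i hi => by rw [hc i (mem_filter.mp hi).2], sum_const, nsmul_eq_mul]

theorem eq_of_card_filter_pos_eq_one {i j : ι} (hcard : #{i | 0 < w i} = 1)
    (hi : 0 < w i) (hj : 0 < w j) : j = i :=
  card_le_one.mp hcard.le j (mem_filter.mpr ⟨mem_univ j, hj⟩) i (mem_filter.mpr ⟨mem_univ i, hi⟩)

end RowDominance

open RowDominance in
theorem generalized_W_row_dominance_general
    (n : ℕ) (w : Fin n → ℝ) (hw : ∀ i, 0 ≤ w i)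
    (hnorm : ∑ i, (w i) ^ 2 = 1)
    (S : ℝ) (hS : S = ∑ i, w i)
    (hdom : ∀ i, 0 < w i → S - w i ≤ w i) :
    (Finset.univ.filter (fun i => 0 < w i)).card ≤ 2 ∧
    ((Finset.univ.filter (fun i => 0 < w i)).card = 2 →
      ∀ i, 0 < w i → w i = 1 / Real.sqrt 2) ∧
    ((Finset.univ.filter (fun i => 0 < w i)).card = 1 →
      ∀ i, 0 < w i → w i = 1) := by
  subst hS
  refine ⟨card_filter_pos_le_two hw hnorm hdom, fun hcard i hi => ?_, fun hcard i hi => ?_⟩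
  · have hsq := sum_sq_eq_card_mul_sq hw fun j hj =>
      (eq_half_sum_of_card_filter_pos_eq_two hw hdom hcard hj).trans
        (eq_half_sum_of_card_filter_pos_eq_two hw hdom hcard hi).symm
    rw [hcard, hnorm] at hsq
    rw [one_div, ← Real.sqrt_inv, ← Real.sqrt_sq hi.le]
    congr 1
    push_cast at hsq
    linarith
  · have hsq := sum_sq_eq_card_mul_sq hw fun j hj =>
      congrArg w (eq_of_card_filter_pos_eq_one hcard hi hj)
    rw [hcard, hnorm, Nat.cast_one, one_mul] at hsq
    nlinarith

theorem generalized_W_row_dominance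
    (n : ℕ) (hn : 1 ≤ n) (w : Fin n → ℝ) (hw : ∀ i, 0 ≤ w i)
    (hnorm : ∑ i, (w i) ^ 2 = 1)
    (S : ℝ) (hS : S = ∑ i, w i)
    (hdom : ∀ i, 0 < w i → S - w i ≤ w i) :
    (Finset.univ.filter (fun i => 0 < w i)).card ≤ 2 ∧
    ((Finset.univ.filter (fun i => 0 < w i)).card = 2 →
      ∀ i, 0 < w i → w i = 1 / Real.sqrt 2) ∧
    ((Finset.univ.filter (fun i => 0 < w i)).card = 1 →
      ∀ i, 0 < w i → w i = 1) :=
  generalized_W_row_dominance_general n w hw hnorm S hS hdom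
end

section
/- Let A ⊆ F₂ⁿ be an affine subspace (a coset a + C of a linear subspace C) of dimension m such that all elements of A have the same Hamming weight. Then m ≤ n/2. -/
/-!
Let `S` be the support of `a`. Since `a + C` has constant weight, `wt (a + x) = wt a` for every
`x ∈ C`. A nonzero `x ∈ C` supported off `S` would increase the weight, and one supported
inside `S` would decrease it. Hence the restrictions of `C` to the coordinates in `S` and to
those outside `S` are both injective, so `m ≤ #S` and `m ≤ n - #S`.
-/

open Finset

theorem hammingNorm_add_of_forall_eq_zero_or {ι : Type*} [Fintype ι] {β : ι → Type*}
    [∀ i, AddZeroClass (β i)] [∀ i, DecidableEq (β i)] {x y : ∀ i, β i}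
    (h : ∀ i, x i = 0 ∨ y i = 0) :
    hammingNorm (x + y) = hammingNorm x + hammingNorm y := by
  simp only [hammingNorm, card_filter, ← sum_add_distrib]
  refine sum_congr rfl fun i _ => ?_
  rcases h i with hi | hi <;> simp [hi]

theorem ZMod.hammingNorm_add_add_hammingNorm_of_support_subset {ι : Type*} [Fintype ι]
    {a x : ι → ZMod 2} (h : ∀ i, a i = 0 → x i = 0) :
    hammingNorm (a + x) + hammingNorm x = hammingNorm a := by
  -- `a = (a + x) + x`, and where `x i = 1` also `a i = 1`, so `(a + x) i = 0`.
  have hdisj : ∀ i, (a + x) i = 0 ∨ x i = 0 := fun i => by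
    have : ∀ u v : ZMod 2, (u = 0 → v = 0) → u + v = 0 ∨ v = 0 := by decide
    exact this (a i) (x i) (h i)
  have hxx : x + x = 0 := funext fun i => CharTwo.add_self_eq_zero (x i)
  rw [← hammingNorm_add_of_forall_eq_zero_or hdisj, add_assoc, hxx, add_zero]

theorem Submodule.finrank_le_card_of_forall_eq_zero {K ι : Type*} [Field K] [Fintype ι]
    (C : Submodule K (ι → K)) (T : Finset ι)
    (hT : ∀ x ∈ C, (∀ i ∈ T, x i = 0) → x = 0) :
    Module.finrank K C ≤ #T := by
  let restrict : C →ₗ[K] (T → K) :=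
    (LinearMap.funLeft K K ((↑) : T → ι)).comp C.subtype
  have hinj : Function.Injective restrict := by
    rw [← LinearMap.ker_eq_bot, LinearMap.ker_eq_bot']
    intro x hx
    exact Subtype.ext <| hT x x.2 fun i hi => congrFun hx ⟨i, hi⟩
  simpa using LinearMap.finrank_le_finrank_of_injective hinj

theorem constant_weight_affine_dim_bound
    (n m : ℕ) (C : Submodule (ZMod 2) (Fin n → ZMod 2))
    (hdim : Module.finrank (ZMod 2) C = m)
    (a : Fin n → ZMod 2)
    (hconst : ∀ x ∈ C, ∀ y ∈ C, hammingNorm (a + x) = hammingNorm (a + y)) :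
    2 * m ≤ n := by
  have hnorm : ∀ x ∈ C, hammingNorm (a + x) = hammingNorm a := fun x hx => by
    simpa using hconst x hx 0 C.zero_mem
  have h_supp : m ≤ #{i | a i ≠ 0} :=
    hdim ▸ C.finrank_le_card_of_forall_eq_zero _ fun x hx hS => by
      have := hammingNorm_add_of_forall_eq_zero_or (x := a) (y := x) fun i =>
        or_iff_not_imp_left.mpr fun hi => hS i (by simpa using hi)
      exact hammingNorm_eq_zero.mp (by have := hnorm x hx; omega)
  have h_compl : m ≤ #{i | ¬a i ≠ 0} :=
    hdim ▸ C.finrank_le_card_of_forall_eq_zero _ fun x hx hS => by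
      have := ZMod.hammingNorm_add_add_hammingNorm_of_support_subset (a := a) (x := x)
        fun i hi => hS i (by simpa)
      exact hammingNorm_eq_zero.mp (by have := hnorm x hx; omega)
  have := card_filter_add_card_filter_not (s := univ) fun i => a i ≠ 0
  simp only [card_univ, Fintype.card_fin] at this
  omega
end

section
/- Fix r ∈ (0,1), n ≥ 2, and set τ := ln(1/r), γ₊ := 1 − r^{2/n}. Then γ₊ ≤ 2τ/n. Moreover, defining f_n(γ) := α² + β²γⁿ − αβ(1−γ)^{n/2} with α = r/√(1+r²), β = 1/√(1+r²), one has f_n'(γ) ≥ (n/2)·αβ·r^{1−2/n} for all γ ∈ [0, γ₊], and consequently the window width Δ_n := γ₊ − γ₋ (where γ₋ is the unique zero of f_n in (0, γ₊)) satisfies Δ_n ≤ (2/n)·r^{2/n − 2}·γ₊ⁿ. -/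
/-! Since `α = r β`, the value of `f_n` at `γ₊` is `β² γ₊ⁿ`, and on `[0, γ₊]` the factor
`(1 - γ)^(n/2 - 1)` in `f_n'` is at least `(r^(2/n))^(n/2 - 1) = r^(1 - 2/n)`. The mean value
theorem between the zero `γ₋` and `γ₊` then bounds the window width by `β² γ₊ⁿ` divided by
this slope. The bound `γ₊ ≤ 2τ/n` is `1 + x ≤ eˣ` at `x = (2/n) log r`. -/

open Real Set

theorem sub_le_div_of_le_deriv {f : ℝ → ℝ} {x b m : ℝ} (hm : 0 < m) (hxb : x ≤ b)
    (hf : DifferentiableOn ℝ f (Icc x b)) (hf' : ∀ y ∈ Ioo x b, m ≤ deriv f y) :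
    b - x ≤ (f b - f x) / m := by
  rw [le_div_iff₀' hm]
  refine (convex_Icc x b).mul_sub_le_image_sub_of_le_deriv hf.continuousOn
    (hf.mono interior_subset) (by rwa [interior_Icc]) x ?_ b ?_ hxb <;> simpa

theorem one_sub_rpow_le_mul_log_one_div {r : ℝ} (hr : 0 < r) (t : ℝ) :
    1 - r ^ t ≤ t * log (1 / r) := by
  have := add_one_le_exp (log r * t)
  rw [← rpow_def_of_pos hr] at this
  rw [one_div, log_inv]
  linarith

theorem rpow_one_sub_inv_le_rpow_sub_one {r x p : ℝ} (hr : 0 ≤ r) (hp : 1 ≤ p)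
    (hx : r ^ p⁻¹ ≤ x) : r ^ (1 - p⁻¹) ≤ x ^ (p - 1) := by
  have hexp : p⁻¹ * (p - 1) = 1 - p⁻¹ := by field_simp
  rw [← hexp, rpow_mul hr]
  exact rpow_le_rpow (rpow_nonneg hr _) hx (by linarith)

noncomputable def ghzMagic (n : ℕ) (α β γ : ℝ) : ℝ :=
  α ^ 2 + β ^ 2 * γ ^ (n : ℝ) - α * β * (1 - γ) ^ ((n : ℝ) / 2)

theorem hasDerivAt_ghzMagic (n : ℕ) (α β : ℝ) {γ : ℝ} (hγ : γ < 1) :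
    HasDerivAt (ghzMagic n α β)
      (β ^ 2 * (n * γ ^ (n - 1)) + α * β * ((n : ℝ) / 2 * (1 - γ) ^ ((n : ℝ) / 2 - 1))) γ := by
  have hpow : HasDerivAt (fun x : ℝ => (1 - x) ^ ((n : ℝ) / 2))
      ((n : ℝ) / 2 * (1 - γ) ^ ((n : ℝ) / 2 - 1) * -1) γ :=
    (hasDerivAt_rpow_const (Or.inl (sub_pos.2 hγ).ne')).comp γ ((hasDerivAt_id γ).const_sub 1)
  have hfun : ghzMagic n α β =
      fun x => α ^ 2 + β ^ 2 * x ^ n - α * β * (1 - x) ^ ((n : ℝ) / 2) := by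
    funext x
    simp only [ghzMagic, rpow_natCast]
  rw [hfun]
  exact ((((hasDerivAt_pow n γ).const_mul (β ^ 2)).const_add (α ^ 2)).sub
    (hpow.const_mul (α * β))).congr_deriv (by ring)

theorem le_deriv_ghzMagic {n : ℕ} (hn : 2 ≤ n) {r α β γ : ℝ} (hr : 0 < r) (hαβ : 0 ≤ α * β)
    (hγ0 : 0 ≤ γ) (hγ : r ^ (2 / (n : ℝ)) ≤ 1 - γ) :
    (n : ℝ) / 2 * (α * β) * r ^ (1 - 2 / (n : ℝ)) ≤ deriv (ghzMagic n α β) γ := by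
  have hγ1 : γ < 1 := by linarith [rpow_pos_of_pos hr (2 / (n : ℝ))]
  have hn2 : (2 : ℝ) ≤ n := by exact_mod_cast hn
  have hexp := rpow_one_sub_inv_le_rpow_sub_one hr.le (x := 1 - γ) (p := (n : ℝ) / 2)
    (by linarith) (by rwa [inv_div])
  rw [inv_div] at hexp
  rw [(hasDerivAt_ghzMagic n α β hγ1).deriv]
  have : (n : ℝ) / 2 * (α * β) * r ^ (1 - 2 / (n : ℝ))
      ≤ α * β * ((n : ℝ) / 2 * (1 - γ) ^ ((n : ℝ) / 2 - 1)) := by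
    rw [mul_comm ((n : ℝ) / 2) (α * β), mul_assoc]
    gcongr
  have : 0 ≤ β ^ 2 * (n * γ ^ (n - 1)) := by positivity
  linarith

theorem ghzMagic_one_sub_rpow {n : ℕ} (hn : n ≠ 0) {r : ℝ} (hr : 0 ≤ r) (β : ℝ) :
    ghzMagic n (r * β) β (1 - r ^ (2 / (n : ℝ))) = β ^ 2 * (1 - r ^ (2 / (n : ℝ))) ^ (n : ℝ) := by
  have hexp : 2 / (n : ℝ) * ((n : ℝ) / 2) = 1 := by field_simp
  rw [ghzMagic, sub_sub_cancel, ← rpow_mul hr, hexp, rpow_one]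
  ring

theorem ghzMagic_slope_mul_coeff {n r : ℝ} (hn : n ≠ 0) (hr : 0 < r) (β : ℝ) :
    n / 2 * (r * β * β) * r ^ (1 - 2 / n) * (2 / n * r ^ (2 / n - 2)) = β ^ 2 := by
  have hrpow : r * (r ^ (1 - 2 / n) * r ^ (2 / n - 2)) = 1 := by
    rw [← rpow_add hr, show 1 - 2 / n + (2 / n - 2) = -1 by ring, rpow_neg_one,
      mul_inv_cancel₀ hr.ne']
  calc n / 2 * (r * β * β) * r ^ (1 - 2 / n) * (2 / n * r ^ (2 / n - 2))
      = (n / 2 * (2 / n)) * (r * (r ^ (1 - 2 / n) * r ^ (2 / n - 2))) * β ^ 2 := by ring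
    _ = β ^ 2 := by rw [hrpow]; field_simp

theorem stabilizer_window_width_bound_general
    (n : ℕ) (hn : 2 ≤ n) (r : ℝ) (hr0 : 0 < r)
    (τ : ℝ) (hτ : τ = Real.log (1 / r))
    (γp : ℝ) (hγp : γp = 1 - r ^ (2 / (n : ℝ)))
    (α β : ℝ) (hα : α = r / Real.sqrt (1 + r ^ 2))
    (hβ : β = 1 / Real.sqrt (1 + r ^ 2))
    (f : ℝ → ℝ)
    (hf : f = fun γ => α ^ 2 + β ^ 2 * γ ^ (n : ℝ) - α * β * (1 - γ) ^ ((n : ℝ) / 2)) :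
    γp ≤ 2 * τ / n ∧
    (∀ γ ∈ Set.Icc (0 : ℝ) γp,
      (n : ℝ) / 2 * (α * β) * r ^ (1 - 2 / (n : ℝ)) ≤ deriv f γ) ∧
    (∀ γm ∈ Set.Ioo (0 : ℝ) γp, f γm = 0 →
      γp - γm ≤ 2 / n * r ^ (2 / (n : ℝ) - 2) * γp ^ (n : ℝ)) := by
  obtain rfl : f = ghzMagic n α β := hf
  obtain rfl : α = r * β := by rw [hα, hβ, mul_one_div]
  have hβ0 : 0 < β := by rw [hβ]; positivity
  have hγp1 : γp < 1 := by linarith [rpow_pos_of_pos hr0 (2 / (n : ℝ))]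
  have hderiv : ∀ γ ∈ Icc 0 γp, (n : ℝ) / 2 * (r * β * β) * r ^ (1 - 2 / (n : ℝ))
      ≤ deriv (ghzMagic n (r * β) β) γ :=
    fun γ hγ => le_deriv_ghzMagic hn hr0 (by positivity) hγ.1 (by linarith [hγ.2])
  refine ⟨?_, hderiv, fun γm hγm hfγm => ?_⟩
  · rw [hγp, hτ, mul_div_right_comm]
    exact one_sub_rpow_le_mul_log_one_div hr0 _
  have hwidth := sub_le_div_of_le_deriv (f := ghzMagic n (r * β) β) (by positivity) hγm.2.le
    (fun γ hγ => (hasDerivAt_ghzMagic n _ _ (hγ.2.trans_lt hγp1)).differentiableAt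
      |>.differentiableWithinAt)
    (fun γ hγ => hderiv γ ⟨hγm.1.le.trans hγ.1.le, hγ.2.le⟩)
  rw [hfγm, sub_zero, hγp, ghzMagic_one_sub_rpow (by omega) hr0.le, ← hγp] at hwidth
  refine hwidth.trans_eq ?_
  rw [div_eq_iff (by positivity),
    ← ghzMagic_slope_mul_coeff (Nat.cast_ne_zero.2 (by omega : n ≠ 0)) hr0 β]
  ring

theorem stabilizer_window_width_bound
    (n : ℕ) (hn : 2 ≤ n) (r : ℝ) (hr0 : 0 < r) (hr1 : r < 1)
    (τ : ℝ) (hτ : τ = Real.log (1 / r))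
    (γp : ℝ) (hγp : γp = 1 - r ^ (2 / (n : ℝ)))
    (α β : ℝ) (hα : α = r / Real.sqrt (1 + r ^ 2))
    (hβ : β = 1 / Real.sqrt (1 + r ^ 2))
    (f : ℝ → ℝ)
    (hf : f = fun γ => α ^ 2 + β ^ 2 * γ ^ (n : ℝ) - α * β * (1 - γ) ^ ((n : ℝ) / 2)) :
    γp ≤ 2 * τ / n ∧
    (∀ γ ∈ Set.Icc (0 : ℝ) γp,
      (n : ℝ) / 2 * (α * β) * r ^ (1 - 2 / (n : ℝ)) ≤ deriv f γ) ∧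
    (∀ γm ∈ Set.Ioo (0 : ℝ) γp, f γm = 0 →
      γp - γm ≤ 2 / n * r ^ (2 / (n : ℝ) - 2) * γp ^ (n : ℝ)) :=
  stabilizer_window_width_bound_general n hn r hr0 τ hτ γp hγp α β hα hβ f hf
end

section
/- Fix n ≥ 2 and r ∈ (0,1), and define h_n(r) := 2r − (1 − r^{2/n})^{n/2} on (0,1). Then h_n is strictly increasing on (0,1), and its unique zero is r₁ := (1 + 2^{2/n})^{−n/2}. Consequently, 2r < (1 − r^{2/n})^{n/2} if and only if r < r₁. -/
/-! With `p = n/2`, the map `r ↦ (1 - r ^ p⁻¹) ^ p` is strictly decreasing on `[0, 1]`, so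
`h r = 2 r - (1 - r ^ p⁻¹) ^ p` is strictly increasing and has at most one zero. Writing
`s = r ^ p⁻¹`, the equation `(1 - s) ^ p = 2 s ^ p` becomes `1 - s = 2 ^ p⁻¹ s` after taking
`p`-th roots, whence `s = (1 + 2 ^ p⁻¹)⁻¹` and `r = s ^ p = r₁`. -/

open Set

section
variable {a p c : ℝ}

lemma strictAntiOn_one_sub_rpow_rpow (ha : 0 < a) (hp : 0 < p) :
    StrictAntiOn (fun r : ℝ => (1 - r ^ a) ^ p) (Icc 0 1) := by
  intro x hx y hy hxy
  have hya : y ^ a ≤ 1 := Real.rpow_le_one hy.1 hy.2 ha.le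
  exact Real.rpow_lt_rpow (by linarith) (by linarith [Real.rpow_lt_rpow hx.1 hxy ha]) hp

lemma strictMonoOn_mul_sub_one_sub_rpow_rpow (hc : 0 ≤ c) (ha : 0 < a) (hp : 0 < p) :
    StrictMonoOn (fun r : ℝ => c * r - (1 - r ^ a) ^ p) (Icc 0 1) := by
  intro x hx y hy hxy
  have hanti := strictAntiOn_one_sub_rpow_rpow ha hp hx hy hxy
  have hlin : c * x ≤ c * y := mul_le_mul_of_nonneg_left hxy.le hc
  simp only at hanti ⊢
  linarith

lemma rpow_neg_mem_Ioo {b : ℝ} (hb : 1 < b) (hp : 0 < p) : b ^ (-p) ∈ Ioo 0 1 :=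
  ⟨Real.rpow_pos_of_pos (by linarith) _, Real.rpow_lt_one_of_one_lt_of_neg hb (neg_neg_of_pos hp)⟩

lemma one_sub_rpow_inv_rpow_eq_mul (hc : 0 ≤ c) (hp : 0 < p) :
    (1 - ((1 + c ^ p⁻¹) ^ (-p)) ^ p⁻¹) ^ p = c * (1 + c ^ p⁻¹) ^ (-p) := by
  set b := 1 + c ^ p⁻¹
  have hcp : 0 ≤ c ^ p⁻¹ := Real.rpow_nonneg hc _
  have hb : 0 < b := by positivity
  have hroot : ((b ^ (-p)) ^ p⁻¹) = b⁻¹ := by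
    rw [← Real.rpow_mul hb.le, neg_mul, mul_inv_cancel₀ hp.ne', Real.rpow_neg_one]
  have hsub : 1 - b⁻¹ = c ^ p⁻¹ * b⁻¹ := by
    rw [show c ^ p⁻¹ = b - 1 from (add_sub_cancel_left 1 _).symm, sub_mul,
      mul_inv_cancel₀ hb.ne', one_mul]
  rw [hroot, hsub, Real.mul_rpow hcp (inv_nonneg.mpr hb.le), Real.rpow_inv_rpow hc hp.ne',
    Real.inv_rpow hb.le, Real.rpow_neg hb.le]

end

theorem regime_boundary_h_function
    (n : ℕ) (hn : 2 ≤ n)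
    (h : ℝ → ℝ)
    (hh : h = fun r => 2 * r - (1 - r ^ (2 / (n : ℝ))) ^ ((n : ℝ) / 2))
    (r₁ : ℝ) (hr₁ : r₁ = (1 + 2 ^ (2 / (n : ℝ))) ^ (-(n : ℝ) / 2)) :
    StrictMonoOn h (Set.Ioo 0 1) ∧
    h r₁ = 0 ∧
    (∀ r ∈ Set.Ioo (0 : ℝ) 1, h r = 0 → r = r₁) ∧
    (∀ r ∈ Set.Ioo (0 : ℝ) 1,
      (2 * r < (1 - r ^ (2 / (n : ℝ))) ^ ((n : ℝ) / 2) ↔ r < r₁)) := by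
  have hp : (0 : ℝ) < (n : ℝ) / 2 := by
    have : (2 : ℝ) ≤ n := by exact_mod_cast hn
    linarith
  rw [show (2 : ℝ) / n = ((n : ℝ) / 2)⁻¹ from (inv_div _ _).symm] at hh hr₁ ⊢
  rw [neg_div] at hr₁
  generalize (n : ℝ) / 2 = p at *
  have hmono : StrictMonoOn h (Icc 0 1) :=
    hh ▸ strictMonoOn_mul_sub_one_sub_rpow_rpow zero_le_two (inv_pos.mpr hp) hp
  have hr₁mem : r₁ ∈ Ioo 0 1 :=
    hr₁ ▸ rpow_neg_mem_Ioo (lt_add_of_pos_right 1 (Real.rpow_pos_of_pos two_pos _)) hp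
  have hzero : h r₁ = 0 := by
    rw [hh, hr₁]
    simp only [one_sub_rpow_inv_rpow_eq_mul zero_le_two hp, sub_self]
  refine ⟨hmono.mono Ioo_subset_Icc_self, hzero, fun r hr hr0 =>
    hmono.injOn (Ioo_subset_Icc_self hr) (Ioo_subset_Icc_self hr₁mem) (hr0.trans hzero.symm),
    fun r hr => ?_⟩
  have hlt := hmono.lt_iff_lt (Ioo_subset_Icc_self hr) (Ioo_subset_Icc_self hr₁mem)
  rw [hzero, hh, sub_neg] at hlt
  exact hlt
end
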